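/- arXiv:2104.08526 — 3 statements merged into one kernel-verified Lean document; each statement's English description precedes it below -/
import Mathlib

section
/- Let $Q \subset \mathbb{R}^d$ be a dyadic cube of side length $2^{-n}$ and let $B_k$ be the open ball of radius $2^{-k}$ centered at the origin, with $k < n$. Then the Lebesgue measure of the set $\{x \in \mathbb{R}^d : (x + \partial B_k) \cap Q \neq \emptyset\}$ is at most $C_d \cdot 2^{-k(d-1)} \cdot 2^{-n}$ for a constant $C_d$ depending only on $d$. -/
/-! The cube of side `s = 2^(-n)` lies in the closed ball of radius `D = √d s` about its corner `c`,
so every `x` whose sphere of radius `r = 2^(-k)` meets the cube lies in the annulus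
`r - D ≤ ‖x - c‖ ≤ r + D`. That annulus has volume at most `2 d D (r + D)^(d-1) |B_1|`, and `s ≤ r`
gives `r + D ≤ (1 + √d) r`. -/

open MeasureTheory

/-- `Q` is a dyadic cube of side length `2^(-n)` in `ℝ^d`. -/
def IsDyadicCube (d : ℕ) (n : ℤ) (Q : Set (EuclideanSpace ℝ (Fin d))) : Prop :=
  ∃ m : Fin d → ℤ, Q = {x | ∀ i, (2:ℝ) ^ (-n) * m i ≤ x i ∧ x i < (2:ℝ) ^ (-n) * (m i + 1)}

open Metric Module

theorem EuclideanSpace.dist_le_sqrt_card_mul {ι : Type*} [Fintype ι] {x y : EuclideanSpace ℝ ι}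
    {s : ℝ} (hs : 0 ≤ s) (h : ∀ i, |x i - y i| ≤ s) : dist x y ≤ √(Fintype.card ι) * s := by
  rw [EuclideanSpace.dist_eq]
  calc √(∑ i, dist (x i) (y i) ^ 2) ≤ √(∑ _i : ι, s ^ 2) := by
        gcongr with i
        rw [Real.dist_eq]
        exact h i
    _ = √(Fintype.card ι) * s := by
        rw [Finset.sum_const, Finset.card_univ, nsmul_eq_mul, Real.sqrt_mul (Nat.cast_nonneg _),
          Real.sqrt_sq hs]

theorem IsDyadicCube.exists_subset_closedBall {d : ℕ} {n : ℤ} {Q : Set (EuclideanSpace ℝ (Fin d))}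
    (hQ : IsDyadicCube d n Q) : ∃ c, Q ⊆ closedBall c (√d * (2:ℝ) ^ (-n)) := by
  obtain ⟨m, rfl⟩ := hQ
  set c : EuclideanSpace ℝ (Fin d) := WithLp.toLp 2 fun i ↦ (2:ℝ) ^ (-n) * m i
  refine ⟨c, fun x hx ↦ mem_closedBall.2 ?_⟩
  have hxc (i : Fin d) : |x i - c i| ≤ (2:ℝ) ^ (-n) := by
    obtain ⟨hlo, hhi⟩ := hx i
    rw [abs_le]
    constructor <;> simp only [c] <;> linarith
  simpa using EuclideanSpace.dist_le_sqrt_card_mul (by positivity) hxc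

theorem Metric.setOf_sphere_inter_nonempty_subset {X : Type*} [PseudoMetricSpace X] {s : Set X}
    {c : X} {r D : ℝ} (hs : s ⊆ closedBall c D) :
    {x | (sphere x r ∩ s).Nonempty} ⊆ closedBall c (r + D) \ ball c (r - D) := by
  rintro x ⟨y, hxy, hy⟩
  rw [mem_sphere'] at hxy
  have hyc := mem_closedBall.1 (hs hy)
  refine ⟨mem_closedBall.2 ?_, fun hx ↦ ?_⟩
  · linarith [dist_triangle x y c]
  · linarith [mem_ball.1 hx, dist_triangle x c y, dist_comm c y]

theorem Metric.ball_max_zero {X : Type*} [PseudoMetricSpace X] (c : X) (b : ℝ) :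
    ball c (max b 0) = ball c b := by
  rcases le_total b 0 with hb | hb
  · rw [max_eq_right hb, ball_eq_empty.2 le_rfl, ball_eq_empty.2 hb]
  · rw [max_eq_left hb]

namespace MeasureTheory.Measure

variable {E : Type*} [NormedAddCommGroup E] [NormedSpace ℝ E] [MeasurableSpace E] [BorelSpace E]
  [FiniteDimensional ℝ E] [Nontrivial E] (μ : Measure E) [μ.IsAddHaarMeasure]

theorem addHaar_closedBall_diff_ball_le (c : E) {a b : ℝ} (ha : 0 ≤ a) (hba : b ≤ a) :
    μ (closedBall c a \ ball c b) ≤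
      ENNReal.ofReal (finrank ℝ E * a ^ (finrank ℝ E - 1) * (a - b)) * μ (ball 0 1) := by
  set b' := max b 0
  have hb' : 0 ≤ b' := le_max_right b 0
  have hb'a : b' ≤ a := max_le hba ha
  have hpow : a ^ finrank ℝ E - b' ^ finrank ℝ E ≤ finrank ℝ E * a ^ (finrank ℝ E - 1) * (a - b) :=
    calc a ^ finrank ℝ E - b' ^ finrank ℝ E
        ≤ |a - b'| * finrank ℝ E * max |a| |b'| ^ (finrank ℝ E - 1) :=
          (le_abs_self _).trans (abs_pow_sub_pow_le a b' _)
      _ = finrank ℝ E * a ^ (finrank ℝ E - 1) * (a - b') := by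
          rw [abs_of_nonneg (sub_nonneg.2 hb'a), abs_of_nonneg ha, abs_of_nonneg hb',
            max_eq_left hb'a]
          ring
      _ ≤ finrank ℝ E * a ^ (finrank ℝ E - 1) * (a - b) := by gcongr; exact le_max_left b 0
  rw [← ball_max_zero c b, measure_sdiff ((ball_subset_closedBall).trans
      (closedBall_subset_closedBall hb'a)) measurableSet_ball.nullMeasurableSet
      measure_ball_lt_top.ne, addHaar_closedBall μ c ha, addHaar_ball μ c hb', ← ENNReal.sub_mul
      fun _ _ ↦ measure_ball_lt_top.ne, ← ENNReal.ofReal_sub _ (by positivity)]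
  gcongr

theorem addHaar_setOf_sphere_inter_nonempty_le {s : Set E} {c : E} {r D : ℝ} (hr : 0 ≤ r)
    (hD : 0 ≤ D) (hs : s ⊆ closedBall c D) :
    μ {x | (sphere x r ∩ s).Nonempty} ≤
      ENNReal.ofReal (2 * finrank ℝ E * (r + D) ^ (finrank ℝ E - 1) * D) * μ (ball 0 1) :=
  calc μ {x | (sphere x r ∩ s).Nonempty} ≤ μ (closedBall c (r + D) \ ball c (r - D)) :=
        measure_mono (setOf_sphere_inter_nonempty_subset hs)
    _ ≤ _ := by
        convert addHaar_closedBall_diff_ball_le μ c (a := r + D) (b := r - D) (by positivity)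
          (by linarith) using 3
        ring

end MeasureTheory.Measure

/-- If `Q` is a dyadic cube of side length `2^(-n)` and `k < n`, then the set of
points `x` such that the sphere `x + ∂B_k` (of radius `2^(-k)`) meets `Q` has
Lebesgue measure at most `C_d · 2^(-k(d-1)) · 2^(-n)`. -/
theorem volume_sphere_meets_dyadic_cube_le (d : ℕ) :
    ∃ C : ℝ, 0 < C ∧ ∀ (n k : ℤ) (Q : Set (EuclideanSpace ℝ (Fin d))),
      k < n → IsDyadicCube d n Q →
      volume {x : EuclideanSpace ℝ (Fin d) |
          (Metric.sphere x ((2:ℝ) ^ (-k)) ∩ Q).Nonempty}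
        ≤ ENNReal.ofReal (C * (2:ℝ) ^ (-k * ((d:ℤ) - 1)) * (2:ℝ) ^ (-n)) := by
  rcases eq_or_ne d 0 with rfl | hd
  · refine ⟨1, one_pos, fun n k Q _ _ ↦ ?_⟩
    simp only [sphere_eq_empty_of_subsingleton (zpow_pos two_pos (-k)).ne', Set.empty_inter,
      Set.not_nonempty_empty, Set.ofPred_false, measure_empty, zero_le]
  have : Nonempty (Fin d) := Fin.pos_iff_nonempty.1 (Nat.pos_of_ne_zero hd)
  set v := (volume (ball (0 : EuclideanSpace ℝ (Fin d)) 1)).toReal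
  have hv : 0 < v := ENNReal.toReal_pos (measure_ball_pos _ _ one_pos).ne' measure_ball_lt_top.ne
  have hvol : volume (ball (0 : EuclideanSpace ℝ (Fin d)) 1) = ENNReal.ofReal v :=
    (ENNReal.ofReal_toReal measure_ball_lt_top.ne).symm
  refine ⟨2 * d * √d * (1 + √d) ^ (d - 1) * v, by positivity, fun n k Q hkn hQ ↦ ?_⟩
  obtain ⟨c, hQc⟩ := hQ.exists_subset_closedBall
  set r := (2:ℝ) ^ (-k)
  set s := (2:ℝ) ^ (-n)
  have hsr : s ≤ r := zpow_le_zpow_right₀ one_le_two (by omega)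
  have hr_pow : r ^ (d - 1) = (2:ℝ) ^ (-k * ((d:ℤ) - 1)) := by
    rw [← zpow_natCast, ← zpow_mul, Nat.cast_sub (Nat.pos_of_ne_zero hd), Nat.cast_one]
  calc volume {x | (sphere x r ∩ Q).Nonempty}
      ≤ ENNReal.ofReal (2 * d * (r + √d * s) ^ (d - 1) * (√d * s)) * ENNReal.ofReal v := by
        simpa only [finrank_euclideanSpace, Fintype.card_fin, hvol] using
          volume.addHaar_setOf_sphere_inter_nonempty_le (r := r) (by positivity) (by positivity) hQc
    _ ≤ ENNReal.ofReal (2 * d * √d * (1 + √d) ^ (d - 1) * v * r ^ (d - 1) * s) := by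
        rw [← ENNReal.ofReal_mul (by positivity)]
        refine ENNReal.ofReal_le_ofReal ?_
        calc 2 * d * (r + √d * s) ^ (d - 1) * (√d * s) * v
            ≤ 2 * d * ((1 + √d) * r) ^ (d - 1) * (√d * s) * v := by
              gcongr
              linarith [mul_le_mul_of_nonneg_left hsr (Real.sqrt_nonneg d)]
          _ = 2 * d * √d * (1 + √d) ^ (d - 1) * v * r ^ (d - 1) * s := by rw [mul_pow]; ring
    _ = _ := by rw [hr_pow]
end

section
/- (Cotlar's Lemma) Let $\mathcal{H}$ be a Hilbert space and $(T_k)_{k \in \mathbb{Z}}$ a family of bounded operators on $\mathcal{H}$ with only finitely many nonzero $T_k$. Suppose there is a nonnegative summable sequence $(\alpha_k)_{k \in \mathbb{Z}}$ such that $\max\{\|T_i^* T_j\|, \|T_i T_j^*\|\} \leq \alpha_{i-j}^2$ for all $i, j \in \mathbb{Z}$. Then $\|\sum_k T_k\| \leq \sum_k \alpha_k$. -/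
/-!
Write `S = ∑ k, T k`. For `N` a power of two the C*-identity gives `‖S‖ ^ (2N) = ‖(S⋆ S) ^ N‖`,
and `(S⋆ S) ^ N` expands into the words `T i₁⋆ T j₁ ⋯ T i_N⋆ T j_N`. Grouping the letters of a
word in consecutive pairs starting either at the first or at the second letter bounds its norm in
two ways; the geometric mean of the two bounds is `α 0` times the product of `α` over the
differences of consecutive indices. Summing these products over all words, one index at a time,
gives `‖S‖ ^ (2N) ≤ #s * (∑ α) ^ (2N)`, and letting `N → ∞` yields `‖S‖ ≤ ∑ α`.
-/

open Filter Finset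

section Words

variable {ι : Type*}

def alternatingProd {A : Type*} [Monoid A] (X Y : ι → A) : List ι → A
  | [] => 1
  | i :: l => X i * alternatingProd Y X l

/-- The bound on an alternating product obtained by grouping its letters in consecutive pairs. -/
def pairedWeight (κ : ι → ι → ℝ) (c : ℝ) : List ι → ℝ
  | [] => 1
  | [_] => c
  | i :: j :: l => κ i j ^ 2 * pairedWeight κ c l

def chainWeight (κ : ι → ι → ℝ) : List ι → ℝ
  | [] => 1
  | [_] => 1
  | i :: j :: l => κ i j * chainWeight κ (j :: l)

theorem chainWeight_nonneg {κ : ι → ι → ℝ} (hκ : ∀ i j, 0 ≤ κ i j) : ∀ l, 0 ≤ chainWeight κ l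
  | [] => zero_le_one
  | [_] => zero_le_one
  | _ :: j :: l => mul_nonneg (hκ _ _) (chainWeight_nonneg hκ (j :: l))

theorem pairedWeight_cons_mul_pairedWeight (κ : ι → ι → ℝ) (c : ℝ) :
    ∀ (i : ι) (l : List ι),
      pairedWeight κ c (i :: l) * pairedWeight κ c l = c * chainWeight κ (i :: l) ^ 2
  | _, [] => by simp [pairedWeight, chainWeight]
  | _, [_] => by simp [pairedWeight, chainWeight]; ring
  | i, j :: k :: l => by
    simp only [pairedWeight, chainWeight]
    linear_combination κ i j ^ 2 * κ j k ^ 2 * pairedWeight_cons_mul_pairedWeight κ c k l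

section NormedRing

variable {A : Type*} [NormedRing A] {X Y : ι → A} {κ : ι → ι → ℝ} {c : ℝ}

theorem norm_alternatingProd_le_pairedWeight (h1 : ‖(1 : A)‖ ≤ 1)
    (hXY : ∀ i j, ‖X i * Y j‖ ≤ κ i j ^ 2) (hX : ∀ i, ‖X i‖ ≤ c) :
    ∀ l, ‖alternatingProd X Y l‖ ≤ pairedWeight κ c l
  | [] => h1
  | [i] => by simpa [alternatingProd, pairedWeight] using hX i
  | i :: j :: l => by
    rw [alternatingProd, alternatingProd, ← mul_assoc, pairedWeight]
    exact (norm_mul_le _ _).trans <| mul_le_mul (hXY i j)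
      (norm_alternatingProd_le_pairedWeight h1 hXY hX l) (norm_nonneg _) (sq_nonneg _)

/-- Each alternating word is bounded by the geometric mean of its two pairings. -/
theorem norm_alternatingProd_cons_le (h1 : ‖(1 : A)‖ ≤ 1) (hκ : ∀ i j, 0 ≤ κ i j)
    (hXY : ∀ i j, ‖X i * Y j‖ ≤ κ i j ^ 2) (hYX : ∀ i j, ‖Y i * X j‖ ≤ κ i j ^ 2)
    (hX : ∀ i, ‖X i‖ ≤ c) (hY : ∀ i, ‖Y i‖ ≤ c) (i : ι) (l : List ι) :
    ‖alternatingProd X Y (i :: l)‖ ≤ c * chainWeight κ (i :: l) := by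
  have hc : 0 ≤ c := (norm_nonneg _).trans (hX i)
  have h_tail : ‖alternatingProd X Y (i :: l)‖ ≤ c * pairedWeight κ c l :=
    (norm_mul_le _ _).trans <| mul_le_mul (hX i)
      (norm_alternatingProd_le_pairedWeight h1 hYX hY l) (norm_nonneg _) hc
  have h_head := norm_alternatingProd_le_pairedWeight h1 hXY hX (i :: l)
  have h_sq : ‖alternatingProd X Y (i :: l)‖ ^ 2 ≤ (c * chainWeight κ (i :: l)) ^ 2 :=
    calc ‖alternatingProd X Y (i :: l)‖ ^ 2
        ≤ pairedWeight κ c (i :: l) * (c * pairedWeight κ c l) := by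
          rw [sq]
          exact mul_le_mul h_head h_tail (norm_nonneg _) ((norm_nonneg _).trans h_head)
      _ = (c * chainWeight κ (i :: l)) ^ 2 := by
          rw [mul_left_comm, pairedWeight_cons_mul_pairedWeight]; ring
  exact (pow_le_pow_iff_left₀ (norm_nonneg _)
    (mul_nonneg hc (chainWeight_nonneg hκ _)) two_ne_zero).mp h_sq

end NormedRing

/-- The sum of `F w` over all words `w` of length `n` with letters in `s`. -/
def wordSum {M : Type*} [AddCommMonoid M] (s : Finset ι) : ℕ → (List ι → M) → M
  | 0, F => F []
  | n + 1, F => ∑ i ∈ s, wordSum s n fun l => F (i :: l)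

variable {s : Finset ι}

theorem wordSum_le_wordSum {M : Type*} [AddCommMonoid M] [PartialOrder M] [IsOrderedAddMonoid M] :
    ∀ {n : ℕ} {F G : List ι → M}, (∀ l, l.length = n → F l ≤ G l) →
      wordSum s n F ≤ wordSum s n G
  | 0, _, _, h => h [] rfl
  | _ + 1, _, _, h => sum_le_sum fun i _ =>
      wordSum_le_wordSum fun l hl => h (i :: l) (by simp [hl])

theorem wordSum_nonneg {M : Type*} [AddCommMonoid M] [PartialOrder M] [IsOrderedAddMonoid M] :
    ∀ {n : ℕ} {F : List ι → M}, (∀ l, 0 ≤ F l) → 0 ≤ wordSum s n F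
  | 0, _, h => h []
  | _ + 1, _, h => sum_nonneg fun _ _ => wordSum_nonneg fun _ => h _

theorem norm_wordSum_le {E : Type*} [SeminormedAddCommGroup E] :
    ∀ (n : ℕ) (F : List ι → E), ‖wordSum s n F‖ ≤ wordSum s n fun l => ‖F l‖
  | 0, _ => le_rfl
  | n + 1, _ => (norm_sum_le _ _).trans <| sum_le_sum fun _ _ => norm_wordSum_le n _

theorem mul_wordSum {R : Type*} [NonUnitalNonAssocSemiring R] (a : R) :
    ∀ (n : ℕ) (F : List ι → R), a * wordSum s n F = wordSum s n fun l => a * F l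
  | 0, _ => rfl
  | n + 1, _ => by simp only [wordSum, mul_sum, mul_wordSum a n]

theorem wordSum_alternatingProd_two_mul {A : Type*} [Semiring A] (X Y : ι → A) :
    ∀ N : ℕ, wordSum s (2 * N) (alternatingProd X Y) = ((∑ i ∈ s, X i) * ∑ j ∈ s, Y j) ^ N
  | 0 => by simp [wordSum, alternatingProd]
  | N + 1 => by
    rw [show 2 * (N + 1) = 2 * N + 1 + 1 by ring, pow_succ',
      ← wordSum_alternatingProd_two_mul X Y N, sum_mul_sum]
    simp only [wordSum, alternatingProd, ← mul_assoc, ← mul_wordSum, sum_mul]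

theorem wordSum_chainWeight_le {κ : ι → ι → ℝ} {M : ℝ} (hκ : ∀ i j, 0 ≤ κ i j) (hM : 0 ≤ M)
    (hcol : ∀ j, ∑ i ∈ s, κ i j ≤ M) :
    ∀ n : ℕ, wordSum s (n + 1) (chainWeight κ) ≤ #s * M ^ n
  | 0 => by simp [wordSum, chainWeight]
  | n + 1 => calc
      wordSum s (n + 2) (chainWeight κ)
          = ∑ j ∈ s, (∑ i ∈ s, κ i j) * wordSum s n fun l => chainWeight κ (j :: l) := by
            simp only [wordSum, chainWeight, ← mul_wordSum, sum_mul]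
            exact sum_comm
      _ ≤ ∑ j ∈ s, M * wordSum s n fun l => chainWeight κ (j :: l) :=
            sum_le_sum fun j _ => mul_le_mul_of_nonneg_right (hcol j)
              (wordSum_nonneg fun _ => chainWeight_nonneg hκ _)
      _ = M * wordSum s (n + 1) (chainWeight κ) := by rw [← mul_sum]; rfl
      _ ≤ M * (#s * M ^ n) := mul_le_mul_of_nonneg_left (wordSum_chainWeight_le hκ hM hcol n) hM
      _ = #s * M ^ (n + 1) := by ring

end Words

theorem le_of_frequently_pow_le_mul_pow {x y C : ℝ} (hy : 0 ≤ y)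
    (h : ∃ᶠ n in atTop, x ^ n ≤ C * y ^ n) : x ≤ y := by
  by_contra! hyx
  have hx : 0 < x := hy.trans_lt hyx
  suffices ∀ᶠ n in atTop, C * y ^ n < x ^ n from (h.and_eventually this).exists.elim
    fun n hn => hn.1.not_gt hn.2
  rcases hy.eq_or_lt with rfl | hy
  · filter_upwards [eventually_ge_atTop 1] with n hn
    simpa [zero_pow (Nat.one_le_iff_ne_zero.mp hn)] using pow_pos hx n
  · filter_upwards [(tendsto_pow_atTop_atTop_of_one_lt
      ((one_lt_div hy).mpr hyx)).eventually_gt_atTop C] with n hn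
    rwa [div_pow, lt_div_iff₀ (pow_pos hy n)] at hn

theorem CStarRing.norm_one_le {A : Type*} [NormedRing A] [StarRing A] [CStarRing A] :
    ‖(1 : A)‖ ≤ 1 := by
  nontriviality A
  exact CStarRing.norm_one.le

/-- The Cotlar–Stein lemma in a C⋆-ring. -/
theorem CStarRing.norm_sum_le_of_almostOrthogonal {A ι : Type*} [NormedRing A] [StarRing A]
    [CStarRing A] (T : ι → A) (s : Finset ι) (κ : ι → ι → ℝ) (M : ℝ) (hκ : ∀ i j, 0 ≤ κ i j)
    (hTT : ∀ i j, ‖star (T i) * T j‖ ≤ κ i j ^ 2) (hTT' : ∀ i j, ‖T i * star (T j)‖ ≤ κ i j ^ 2)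
    (hM : 0 ≤ M) (hdiag : ∀ i, κ i i ≤ M) (hcol : ∀ j, ∑ i ∈ s, κ i j ≤ M) :
    ‖∑ i ∈ s, T i‖ ≤ M := by
  set S := ∑ i ∈ s, T i
  have hT : ∀ i, ‖T i‖ ≤ M := fun i => by
    refine ((pow_le_pow_iff_left₀ (norm_nonneg _) (hκ i i) two_ne_zero).mp ?_).trans (hdiag i)
    simpa [sq, CStarRing.norm_star_mul_self] using hTT i i
  have hword : ∀ i l, ‖alternatingProd (star ∘ T) T (i :: l)‖ ≤ M * chainWeight κ (i :: l) :=
    norm_alternatingProd_cons_le CStarRing.norm_one_le hκ hTT hTT'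
      (fun i => (norm_star _).trans_le (hT i)) hT
  have key : ∀ m, ‖S‖ ^ (2 * 2 ^ m) ≤ #s * M ^ (2 * 2 ^ m) := by
    intro m
    obtain ⟨n, hn⟩ : ∃ n, 2 * 2 ^ m = n + 1 := ⟨_, (Nat.succ_pred_eq_of_pos (by positivity)).symm⟩
    calc ‖S‖ ^ (2 * 2 ^ m) = ‖(star S * S) ^ 2 ^ m‖ := by
          rw [(IsSelfAdjoint.star_mul_self S).norm_pow_two_pow, CStarRing.norm_star_mul_self,
            ← sq, pow_mul]
      _ = ‖wordSum s (n + 1) (alternatingProd (star ∘ T) T)‖ := by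
          rw [← hn, wordSum_alternatingProd_two_mul, star_sum]; rfl
      _ ≤ wordSum s (n + 1) fun l => ‖alternatingProd (star ∘ T) T l‖ := norm_wordSum_le _ _
      _ ≤ wordSum s (n + 1) fun l => M * chainWeight κ l := wordSum_le_wordSum fun l hl => by
          obtain ⟨i, l, rfl⟩ := List.exists_cons_of_length_eq_add_one hl
          exact hword i l
      _ = M * wordSum s (n + 1) (chainWeight κ) := (mul_wordSum _ _ _).symm
      _ ≤ M * (#s * M ^ n) := mul_le_mul_of_nonneg_left (wordSum_chainWeight_le hκ hM hcol n) hM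
      _ = #s * M ^ (2 * 2 ^ m) := by rw [hn]; ring
  refine le_of_frequently_pow_le_mul_pow hM (frequently_atTop.mpr fun n => ⟨2 * 2 ^ n, ?_, key n⟩)
  have := n.lt_two_pow_self
  omega

theorem cotlar_lemma_general {H : Type*} [NormedAddCommGroup H] [InnerProductSpace ℝ H]
    [CompleteSpace H] (T : ℤ → H →L[ℝ] H) (s : Finset ℤ)
    (α : ℤ → ℝ) (hα : ∀ k, 0 ≤ α k) (hsum : Summable α)
    (hbound : ∀ i j : ℤ,
      max ‖(ContinuousLinearMap.adjoint (T i)).comp (T j)‖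
          ‖(T i).comp (ContinuousLinearMap.adjoint (T j))‖ ≤ α (i - j) ^ 2) :
    ‖∑ k ∈ s, T k‖ ≤ ∑' k, α k := by
  refine CStarRing.norm_sum_le_of_almostOrthogonal T s (fun i j => α (i - j)) (∑' k, α k)
    (fun _ _ => hα _) (fun i j => (le_max_left _ _).trans (hbound i j))
    (fun i j => (le_max_right _ _).trans (hbound i j)) (tsum_nonneg hα)
    (fun i => by simpa using hsum.le_tsum 0 fun k _ => hα k) fun j => ?_
  calc ∑ i ∈ s, α (i - j) ≤ ∑' i, α (i - j) :=
        Summable.sum_le_tsum s (fun _ _ => hα _) ((Equiv.subRight j).summable_iff.mpr hsum)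
    _ = ∑' k, α k := (Equiv.subRight j).tsum_eq α

/-- **Cotlar's Lemma.** If `(T k)` is a family of bounded operators on a Hilbert
space, all but finitely many zero, and `(α k)` is a nonnegative summable sequence with
`max ‖T i * (T j)ᵃ‖ ‖(T i)ᵃ * T j‖ ≤ α (i - j) ^ 2`, then `‖∑ T k‖ ≤ ∑ α k`. -/
theorem cotlar_lemma {H : Type*} [NormedAddCommGroup H] [InnerProductSpace ℝ H]
    [CompleteSpace H] (T : ℤ → H →L[ℝ] H) (s : Finset ℤ)
    (hT : ∀ k ∉ s, T k = 0) (α : ℤ → ℝ) (hα : ∀ k, 0 ≤ α k) (hsum : Summable α)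
    (hbound : ∀ i j : ℤ,
      max ‖(ContinuousLinearMap.adjoint (T i)).comp (T j)‖
          ‖(T i).comp (ContinuousLinearMap.adjoint (T j))‖ ≤ α (i - j) ^ 2) :
    ‖∑ k ∈ s, T k‖ ≤ ∑' k, α k :=
  cotlar_lemma_general T s α hα hsum hbound
end

section
/- (Carbery's variant of Cotlar's Lemma) Let $(Q_k)_{k \in \mathbb{Z}}$ and $(R_k)_{k \in \mathbb{Z}}$ be sequences of bounded operators on a Hilbert space $\mathcal{H}$, only finitely many $R_k$ nonzero, and let $\varepsilon > 0$, $C > 0$. Assume: (i) $\sum_j Q_j = I$ in the strong operator topology; (ii) $\|Q_j^* Q_k\| + \|Q_j Q_k^*\| \leq C\, 2^{-\varepsilon|j-k|}$ for all $j,k$; (iii) $\|R_j Q_k^*\| + \|R_j^* Q_k\| \leq C\, 2^{-\varepsilon|j-k|}$ for all $j,k$; (iv) $\|R_j\| \leq C$ for all $j$. Then $\sum_j R_j$ is a bounded operator on $\mathcal{H}$ with operator norm bounded by a constant depending only on $C$ and $\varepsilon$. -/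
/-!
Inserting `∑ₘ Q m = 1` between two factors writes, e.g., `adjoint (R j) ∘L R k` as
`∑ₘ adjoint (R j) ∘L Q m ∘L R k`. Each term is bounded both by `‖adjoint (R j) ∘L Q m‖ ‖R k‖` and
by `‖adjoint (R j)‖ ‖Q m ∘L R k‖`, so by the smaller of two quantities decaying in `|j - m|` and
in `|m - k|`; that minimum decays in `|j - k|` and is summable in `m`. One such insertion shows
that `R j ∘L Q k` and `Q k ∘L R j` decay in `|j - k|` (after taking adjoints, so that only the
strong sum `∑ₘ Q m = 1` is needed), and a second one shows the same for `adjoint (R j) ∘L R k`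
and `R j ∘L adjoint (R k)`. The Cotlar–Stein lemma then bounds `‖∑ₖ R k‖`.

Cotlar–Stein itself is the power trick in a C⋆-algebra: with `X = ∑ᵢ Tᵢ` and `S = X⋆X`,
`‖X‖ ^ 2 ^ (m + 1) = ‖S ^ 2 ^ m‖ ≤ ‖X‖ ‖X S ^ (2 ^ m - 1)‖`, and `X S ^ n` expands into words
`Tᵢ T_{j₁}⋆ T_{k₁} ⋯ T_{jₙ}⋆ T_{kₙ}`, each bounded by the geometric mean of its two groupings.
-/

open Real Finset Filter

noncomputable def decay (δ : ℝ) (j k : ℤ) : ℝ := 2 ^ (-(δ * |(j : ℝ) - k|))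

noncomputable def decaySum (δ : ℝ) : ℝ := ∑' n : ℤ, decay δ n 0

section Decay

variable {δ : ℝ}

theorem decay_pos (δ : ℝ) (j k : ℤ) : 0 < decay δ j k := rpow_pos_of_pos two_pos _

@[simp] theorem decay_self (δ : ℝ) (j : ℤ) : decay δ j j = 1 := by simp [decay]

theorem decay_comm (δ : ℝ) (j k : ℤ) : decay δ j k = decay δ k j := by
  rw [decay, decay, abs_sub_comm]

theorem decay_anti {δ' : ℝ} (h : δ' ≤ δ) (j k : ℤ) : decay δ j k ≤ decay δ' j k :=
  rpow_le_rpow_of_exponent_le one_le_two <|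
    neg_le_neg <| mul_le_mul_of_nonneg_right h (abs_nonneg _)

theorem decay_half_sq (δ : ℝ) (j k : ℤ) : decay (δ / 2) j k ^ 2 = decay δ j k := by
  rw [decay, decay, ← rpow_natCast, ← rpow_mul zero_le_two]
  ring_nf

theorem min_decay_le (hδ : 0 ≤ δ) (j m k : ℤ) :
    min (decay δ j m) (decay δ m k) ≤ decay (δ / 3) j k * decay (δ / 3) m k := by
  have htri : |(j : ℝ) - k| ≤ |(j : ℝ) - m| + |(m : ℝ) - k| := abs_sub_le _ _ _
  rw [decay, decay, decay, decay, ← rpow_add two_pos]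
  -- `|j - k| + |m - k| ≤ 3 * max |j - m| |m - k|`
  rcases le_total |(m : ℝ) - k| |(j : ℝ) - m| with h | h
  · refine (min_le_left _ _).trans (rpow_le_rpow_of_exponent_le one_le_two ?_)
    nlinarith
  · refine (min_le_right _ _).trans (rpow_le_rpow_of_exponent_le one_le_two ?_)
    nlinarith

theorem decay_eq_pow_natAbs (δ : ℝ) (j k : ℤ) : decay δ j k = (2 ^ (-δ)) ^ (j - k).natAbs := by
  rw [decay, ← rpow_natCast, ← rpow_mul zero_le_two, Nat.cast_natAbs, Int.cast_abs, Int.cast_sub]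
  ring_nf

theorem summable_decay (hδ : 0 < δ) (k : ℤ) : Summable fun m => decay δ m k := by
  have hr : (2 : ℝ) ^ (-δ) < 1 := rpow_lt_one_of_one_lt_of_neg one_lt_two (neg_neg_iff_pos.2 hδ)
  have hgeom := summable_geometric_of_lt_one (rpow_nonneg zero_le_two _) hr
  have : Summable fun n : ℤ => ((2 : ℝ) ^ (-δ)) ^ n.natAbs :=
    .of_nat_of_neg (by simpa using hgeom) (by simpa using hgeom)
  exact ((Equiv.subRight k).summable_iff.2 this).congr fun m => (decay_eq_pow_natAbs δ m k).symm

theorem tsum_decay (δ : ℝ) (k : ℤ) : ∑' m, decay δ m k = decaySum δ := by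
  simp only [decaySum, decay_eq_pow_natAbs, sub_zero]
  exact (Equiv.subRight k).tsum_eq fun n => ((2 : ℝ) ^ (-δ)) ^ n.natAbs

theorem sum_decay_le_decaySum (hδ : 0 < δ) (s : Finset ℤ) (k : ℤ) :
    ∑ m ∈ s, decay δ m k ≤ decaySum δ :=
  tsum_decay δ k ▸ (summable_decay hδ k).sum_le_tsum s fun m _ => (decay_pos δ m k).le

theorem one_le_decaySum (hδ : 0 < δ) : 1 ≤ decaySum δ := by
  simpa using sum_decay_le_decaySum hδ {0} 0

end Decay

theorem le_of_frequently_pow_le_mul_pow_s6 {a b M : ℝ} (hb : 0 ≤ b)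
    (h : ∃ᶠ n in atTop, a ^ n ≤ M * b ^ n) : a ≤ b := by
  by_contra! hba
  have ha : 0 < a := hb.trans_lt hba
  rcases hb.eq_or_lt with rfl | hb
  · obtain ⟨n, hn, hle⟩ := frequently_atTop.1 h 1
    rw [zero_pow (by omega), mul_zero] at hle
    exact (pow_pos ha n).not_ge hle
  · obtain ⟨N, hN⟩ := pow_unbounded_of_one_lt M ((one_lt_div hb).2 hba)
    obtain ⟨n, hn, hle⟩ := frequently_atTop.1 h N
    have : (a / b) ^ n ≤ M := by rwa [div_pow, div_le_iff₀ (pow_pos hb n)]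
    exact hN.not_ge ((pow_le_pow_right₀ ((one_lt_div hb).2 hba).le hn).trans this)

def listsOfLength {α : Type*} (t : Finset α) : ℕ → Finset (List α)
  | 0 => {[]}
  | n + 1 => (t ×ˢ listsOfLength t n).map
      ⟨fun p => p.1 :: p.2, fun _ _ h => Prod.ext (List.cons.inj h).1 (List.cons.inj h).2⟩

theorem sum_listsOfLength_succ {α M : Type*} [AddCommMonoid M] (t : Finset α) (n : ℕ)
    (f : List α → M) :
    ∑ l ∈ listsOfLength t (n + 1), f l = ∑ a ∈ t, ∑ l ∈ listsOfLength t n, f (a :: l) := by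
  rw [listsOfLength, sum_map, sum_product]
  rfl

theorem sum_pow_eq_sum_listsOfLength {α R : Type*} [Semiring R] (t : Finset α) (x : α → R)
    (n : ℕ) : (∑ a ∈ t, x a) ^ n = ∑ l ∈ listsOfLength t n, (l.map x).prod := by
  induction n with
  | zero => simp [listsOfLength]
  | succ n ih =>
    simp only [pow_succ', ih, sum_listsOfLength_succ, sum_mul_sum, List.map_cons, List.prod_cons]

section CotlarStein

variable {A ι : Type*} [NormedRing A] [StarRing A]

def starMulWord (T : ι → A) (l : List (ι × ι)) : A := (l.map fun p => star (T p.1) * T p.2).prod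

/- For the word `T_{j₁}⋆ T_{k₁} ⋯ T_{jₙ}⋆ T_{kₙ}` encoded by `l = [(j₁, k₁), …, (jₙ, kₙ)]`,
`pairWeight d l = ∏ d jᵣ kᵣ` and `linkWeight d i l = ∏ d kᵣ₋₁ jᵣ` with `k₀ = i`. -/
def pairWeight (d : ι → ι → ℝ) (l : List (ι × ι)) : ℝ := (l.map fun p => d p.1 p.2).prod

def linkWeight (d : ι → ι → ℝ) : ι → List (ι × ι) → ℝ
  | _, [] => 1
  | i, p :: l => d i p.1 * linkWeight d p.2 l

variable {T : ι → A} {d : ι → ι → ℝ} {β : ℝ}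

@[simp] theorem starMulWord_nil : starMulWord T [] = 1 := rfl

@[simp] theorem starMulWord_cons (p : ι × ι) (l : List (ι × ι)) :
    starMulWord T (p :: l) = star (T p.1) * T p.2 * starMulWord T l := rfl

@[simp] theorem pairWeight_nil : pairWeight d [] = 1 := rfl

@[simp] theorem pairWeight_cons (p : ι × ι) (l : List (ι × ι)) :
    pairWeight d (p :: l) = d p.1 p.2 * pairWeight d l := rfl

@[simp] theorem linkWeight_nil (i : ι) : linkWeight d i [] = 1 := rfl

@[simp] theorem linkWeight_cons (i : ι) (p : ι × ι) (l : List (ι × ι)) :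
    linkWeight d i (p :: l) = d i p.1 * linkWeight d p.2 l := rfl

theorem norm_mul_starMulWord_le_pairWeight (hd : ∀ i j, ‖star (T i) * T j‖ ≤ d i j ^ 2) (x : A)
    (l : List (ι × ι)) : ‖x * starMulWord T l‖ ≤ ‖x‖ * pairWeight d l ^ 2 := by
  induction l generalizing x with
  | nil => simp
  | cons p l ih =>
    rw [starMulWord_cons, ← mul_assoc]
    calc ‖x * (star (T p.1) * T p.2) * starMulWord T l‖
        ≤ ‖x * (star (T p.1) * T p.2)‖ * pairWeight d l ^ 2 := ih _
      _ ≤ ‖x‖ * d p.1 p.2 ^ 2 * pairWeight d l ^ 2 := by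
        gcongr
        exact (norm_mul_le _ _).trans (by gcongr; exact hd _ _)
      _ = ‖x‖ * pairWeight d (p :: l) ^ 2 := by rw [pairWeight_cons]; ring

theorem norm_mul_starMulWord_le_linkWeight (hd : ∀ i j, ‖T i * star (T j)‖ ≤ d i j ^ 2)
    (hT : ∀ i, ‖T i‖ ≤ β) (i : ι) (l : List (ι × ι)) :
    ‖T i * starMulWord T l‖ ≤ β * linkWeight d i l ^ 2 := by
  induction l generalizing i with
  | nil => simpa using hT i
  | cons p l ih =>
    calc ‖T i * starMulWord T (p :: l)‖
        = ‖T i * star (T p.1) * (T p.2 * starMulWord T l)‖ := by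
          simp only [starMulWord_cons, mul_assoc]
      _ ≤ d i p.1 ^ 2 * (β * linkWeight d p.2 l ^ 2) :=
          (norm_mul_le _ _).trans (mul_le_mul (hd _ _) (ih _) (norm_nonneg _) (sq_nonneg _))
      _ = β * linkWeight d i (p :: l) ^ 2 := by rw [linkWeight_cons]; ring

theorem pairWeight_nonneg (hd0 : ∀ i j, 0 ≤ d i j) (l : List (ι × ι)) : 0 ≤ pairWeight d l :=
  List.prod_nonneg <| by simpa using fun _ i j _ h => h ▸ hd0 i j

theorem linkWeight_nonneg (hd0 : ∀ i j, 0 ≤ d i j) : ∀ (i : ι) l, 0 ≤ linkWeight d i l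
  | _, [] => zero_le_one
  | _, _ :: l => mul_nonneg (hd0 _ _) (linkWeight_nonneg hd0 _ l)

theorem norm_mul_starMulWord_le (hd0 : ∀ i j, 0 ≤ d i j)
    (hd : ∀ i j, ‖star (T i) * T j‖ ≤ d i j ^ 2) (hd' : ∀ i j, ‖T i * star (T j)‖ ≤ d i j ^ 2)
    (hT : ∀ i, ‖T i‖ ≤ β) (i : ι) (l : List (ι × ι)) :
    ‖T i * starMulWord T l‖ ≤ β * (pairWeight d l * linkWeight d i l) := by
  have hβ : 0 ≤ β := (norm_nonneg _).trans (hT i)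
  have hP := pairWeight_nonneg hd0 l
  have hL := linkWeight_nonneg hd0 i l
  refine (pow_le_pow_iff_left₀ (norm_nonneg _) (by positivity) two_ne_zero).1 ?_
  calc ‖T i * starMulWord T l‖ ^ 2
      ≤ (‖T i‖ * pairWeight d l ^ 2) * (β * linkWeight d i l ^ 2) := by
        rw [sq]
        exact mul_le_mul (norm_mul_starMulWord_le_pairWeight hd _ l)
          (norm_mul_starMulWord_le_linkWeight hd' hT i l) (norm_nonneg _) (by positivity)
    _ ≤ (β * pairWeight d l ^ 2) * (β * linkWeight d i l ^ 2) := by gcongr; exact hT i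
    _ = (β * (pairWeight d l * linkWeight d i l)) ^ 2 := by ring

theorem sum_pairWeight_mul_linkWeight_le [Fintype ι] (hd0 : ∀ i j, 0 ≤ d i j)
    (hrow : ∀ i, ∑ j, d i j ≤ β) (n : ℕ) (i : ι) :
    ∑ l ∈ listsOfLength univ n, pairWeight d l * linkWeight d i l ≤ β ^ (2 * n) := by
  have hβ : 0 ≤ β := (sum_nonneg fun j _ => hd0 i j).trans (hrow i)
  induction n generalizing i with
  | zero => simp [listsOfLength]
  | succ n ih =>
    calc ∑ l ∈ listsOfLength univ (n + 1), pairWeight d l * linkWeight d i l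
        = ∑ p : ι × ι, d i p.1 * d p.1 p.2 *
            ∑ l ∈ listsOfLength univ n, pairWeight d l * linkWeight d p.2 l := by
          simp only [sum_listsOfLength_succ, pairWeight_cons, linkWeight_cons, mul_sum]
          exact sum_congr rfl fun p _ => sum_congr rfl fun l _ => by ring
      _ ≤ ∑ p : ι × ι, d i p.1 * d p.1 p.2 * β ^ (2 * n) :=
          sum_le_sum fun p _ => mul_le_mul_of_nonneg_left (ih p.2) (mul_nonneg (hd0 _ _) (hd0 _ _))
      _ = (∑ j, d i j * ∑ k, d j k) * β ^ (2 * n) := by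
          rw [← univ_product_univ, sum_product, sum_mul]
          simp only [mul_sum, sum_mul]
      _ ≤ (β * β) * β ^ (2 * n) := by
          gcongr
          calc ∑ j, d i j * ∑ k, d j k ≤ ∑ j, d i j * β :=
                sum_le_sum fun j _ => mul_le_mul_of_nonneg_left (hrow j) (hd0 _ _)
            _ ≤ β * β := by rw [← sum_mul]; exact mul_le_mul_of_nonneg_right (hrow i) hβ
      _ = β ^ (2 * (n + 1)) := by ring

theorem norm_le_of_norm_star_mul_self_le [CStarRing A] {x : A} {c : ℝ} (hc : 0 ≤ c)
    (h : ‖star x * x‖ ≤ c ^ 2) : ‖x‖ ≤ c :=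
  (pow_le_pow_iff_left₀ (norm_nonneg _) hc two_ne_zero).1 <| by
    rwa [sq ‖x‖, ← CStarRing.norm_star_mul_self]

theorem norm_sum_mul_pow_le [Fintype ι] (hd0 : ∀ i j, 0 ≤ d i j)
    (hd : ∀ i j, ‖star (T i) * T j‖ ≤ d i j ^ 2) (hd' : ∀ i j, ‖T i * star (T j)‖ ≤ d i j ^ 2)
    (hT : ∀ i, ‖T i‖ ≤ β) (hrow : ∀ i, ∑ j, d i j ≤ β) (n : ℕ) :
    ‖(∑ i, T i) * (star (∑ i, T i) * ∑ i, T i) ^ n‖ ≤ Fintype.card ι * β ^ (2 * n + 1) :=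
  calc ‖(∑ i, T i) * (star (∑ i, T i) * ∑ i, T i) ^ n‖
      = ‖∑ i, ∑ l ∈ listsOfLength univ n, T i * starMulWord T l‖ := by
        rw [star_sum, sum_mul_sum, ← Fintype.sum_prod_type', sum_pow_eq_sum_listsOfLength,
          sum_mul_sum]
        rfl
    _ ≤ ∑ i, ∑ l ∈ listsOfLength univ n, β * (pairWeight d l * linkWeight d i l) :=
        norm_sum_le_of_le _ fun i _ => norm_sum_le_of_le _ fun l _ =>
          norm_mul_starMulWord_le hd0 hd hd' hT i l
    _ ≤ ∑ _i : ι, β * β ^ (2 * n) := sum_le_sum fun i _ => by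
        rw [← mul_sum]
        exact mul_le_mul_of_nonneg_left (sum_pairWeight_mul_linkWeight_le hd0 hrow n i)
          ((norm_nonneg _).trans (hT i))
    _ = Fintype.card ι * β ^ (2 * n + 1) := by rw [sum_const, card_univ, nsmul_eq_mul]; ring

theorem norm_sum_le_of_almost_orthogonal [CStarRing A] [Fintype ι] (hd0 : ∀ i j, 0 ≤ d i j)
    (hd : ∀ i j, ‖star (T i) * T j‖ ≤ d i j ^ 2) (hd' : ∀ i j, ‖T i * star (T j)‖ ≤ d i j ^ 2)
    (hrow : ∀ i, ∑ j, d i j ≤ β) (hβ : 0 ≤ β) : ‖∑ i, T i‖ ≤ β := by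
  have hT : ∀ i, ‖T i‖ ≤ β := fun i => (norm_le_of_norm_star_mul_self_le (hd0 i i) (hd i i)).trans
    ((single_le_sum (fun j _ => hd0 i j) (mem_univ i)).trans (hrow i))
  have hXS := norm_sum_mul_pow_le hd0 hd hd' hT hrow
  set X := ∑ i, T i
  set S := star X * X
  have hpow : ∀ m, ‖X‖ ^ 2 ^ (m + 1) ≤ ‖X‖ * ‖X * S ^ (2 ^ m - 1)‖ := by
    intro m
    calc ‖X‖ ^ 2 ^ (m + 1) = ‖S ^ 2 ^ m‖ := by
          rw [(IsSelfAdjoint.star_mul_self X).norm_pow_two_pow, CStarRing.norm_star_mul_self,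
            ← sq, ← pow_mul, pow_succ']
      _ = ‖star X * (X * S ^ (2 ^ m - 1))‖ := by
          rw [← mul_assoc, ← pow_succ', Nat.sub_add_cancel Nat.one_le_two_pow]
      _ ≤ ‖X‖ * ‖X * S ^ (2 ^ m - 1)‖ := (norm_mul_le _ _).trans_eq (by rw [norm_star])
  rcases (norm_nonneg X).eq_or_lt with h0 | hpos
  · exact h0 ▸ hβ
  refine le_of_frequently_pow_le_mul_pow_s6 (M := Fintype.card ι) hβ <|
    frequently_atTop.2 fun N => ⟨2 * (2 ^ N - 1) + 1, ?_, ?_⟩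
  · have := Nat.lt_two_pow_self (n := N)
    omega
  · have h := (hpow N).trans (mul_le_mul_of_nonneg_left (hXS _) hpos.le)
    rw [show 2 ^ (N + 1) = 2 * (2 ^ N - 1) + 1 + 1 by
      have := Nat.one_le_two_pow (n := N); rw [pow_succ]; omega, pow_succ'] at h
    exact le_of_mul_le_mul_left h hpos

end CotlarStein

section Insertion

variable {𝕜 E F G : Type*} [NontriviallyNormedField 𝕜] [NormedAddCommGroup E] [NormedSpace 𝕜 E]
  [NormedAddCommGroup F] [NormedSpace 𝕜 F] [NormedAddCommGroup G] [NormedSpace 𝕜 G]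

open ContinuousLinearMap

theorem ContinuousLinearMap.norm_comp_le_of_hasSum {ι : Type*} {P : ι → E →L[𝕜] E}
    (hP : ∀ x, HasSum (fun m => P m x) x) (U : E →L[𝕜] F) (V : G →L[𝕜] E) {b : ι → ℝ} {B : ℝ}
    (hb : HasSum b B) (hUPV : ∀ m, ‖U ∘L P m ∘L V‖ ≤ b m) : ‖U ∘L V‖ ≤ B :=
  opNorm_le_bound _ (hb.nonneg fun m => (norm_nonneg _).trans (hUPV m)) fun x =>
    ((hP (V x)).mapL U).norm_le_of_bounded (hb.mul_right ‖x‖) fun m =>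
      ((U ∘L P m ∘L V).le_opNorm x).trans (mul_le_mul_of_nonneg_right (hUPV m) (norm_nonneg x))

theorem ContinuousLinearMap.norm_comp_le_of_decay {P : ℤ → E →L[𝕜] E}
    (hP : ∀ x, HasSum (fun m => P m x) x) {U : E →L[𝕜] F} {V : G →L[𝕜] E} {a δ : ℝ} {j k : ℤ}
    (hδ : 0 < δ) (hUP : ∀ m, ‖U ∘L P m‖ ≤ a * decay δ j m)
    (hPV : ∀ m, ‖P m ∘L V‖ ≤ a * decay δ m k) (hU : ‖U‖ ≤ a) (hV : ‖V‖ ≤ a) :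
    ‖U ∘L V‖ ≤ a ^ 2 * decaySum (δ / 3) * decay (δ / 3) j k := by
  have ha : 0 ≤ a := (norm_nonneg U).trans hU
  have hb : HasSum (fun m => a ^ 2 * decay (δ / 3) j k * decay (δ / 3) m k)
      (a ^ 2 * decay (δ / 3) j k * decaySum (δ / 3)) :=
    tsum_decay (δ / 3) k ▸ (summable_decay (by positivity) k).hasSum.mul_left _
  refine (norm_comp_le_of_hasSum hP U V hb fun m => ?_).trans_eq (by ring)
  calc ‖U ∘L P m ∘L V‖ ≤ a ^ 2 * min (decay δ j m) (decay δ m k) := by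
        rw [mul_min_of_nonneg _ _ (sq_nonneg a)]
        refine le_min ?_ ?_
        · calc ‖U ∘L P m ∘L V‖ = ‖(U ∘L P m) ∘L V‖ := rfl
            _ ≤ a * decay δ j m * a := (opNorm_comp_le _ _).trans <|
                mul_le_mul (hUP m) hV (norm_nonneg _) (mul_nonneg ha (decay_pos δ j m).le)
            _ = a ^ 2 * decay δ j m := by ring
        · calc ‖U ∘L P m ∘L V‖ ≤ a * (a * decay δ m k) :=
                (opNorm_comp_le _ _).trans <| mul_le_mul hU (hPV m) (norm_nonneg _) ha
            _ = a ^ 2 * decay δ m k := by ring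
    _ ≤ a ^ 2 * (decay (δ / 3) j k * decay (δ / 3) m k) := by
        gcongr
        exact min_decay_le hδ.le j m k
    _ = _ := by ring

end Insertion

theorem norm_sum_le_of_decay {A : Type*} [NormedRing A] [StarRing A] [CStarRing A] (R : ℤ → A)
    (s : Finset ℤ) {a δ : ℝ} (hδ : 0 < δ) (hR : ∀ j k, ‖star (R j) * R k‖ ≤ a * decay δ j k)
    (hR' : ∀ j k, ‖R j * star (R k)‖ ≤ a * decay δ j k) :
    ‖∑ k ∈ s, R k‖ ≤ √a * decaySum (δ / 2) := by
  have ha : 0 ≤ a := by simpa using (norm_nonneg _).trans (hR 0 0)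
  have hsq : ∀ j k, (√a * decay (δ / 2) j k) ^ 2 = a * decay δ j k := fun j k => by
    rw [mul_pow, sq_sqrt ha, decay_half_sq]
  rw [← sum_coe_sort]
  refine norm_sum_le_of_almost_orthogonal (d := fun j k : s => √a * decay (δ / 2) j k)
    (fun _ _ => mul_nonneg (sqrt_nonneg a) (decay_pos _ _ _).le)
    (fun j k => (hsq j k).symm ▸ hR j k) (fun j k => (hsq j k).symm ▸ hR' j k) (fun j => ?_)
    (mul_nonneg (sqrt_nonneg a) (zero_le_one.trans (one_le_decaySum (half_pos hδ))))
  rw [← mul_sum, sum_coe_sort s fun k => decay (δ / 2) j k]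
  refine mul_le_mul_of_nonneg_left ?_ (sqrt_nonneg a)
  simpa only [decay_comm] using sum_decay_le_decaySum (half_pos hδ) s j

section Carbery

open ContinuousLinearMap

variable {𝕜 H : Type*} [RCLike 𝕜] [NormedAddCommGroup H] [InnerProductSpace 𝕜 H] [CompleteSpace H]
  {Q R : ℤ → H →L[𝕜] H} {ε c : ℝ}

theorem norm_comp_partition_le (hQ : ∀ x, HasSum (fun m => Q m x) x) (hε : 0 < ε)
    (hQQ : ∀ j k, ‖adjoint (Q j) ∘L Q k‖ ≤ c * decay ε j k)
    (hRQ : ∀ j k, ‖R j ∘L adjoint (Q k)‖ ≤ c * decay ε j k)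
    (hQn : ∀ k, ‖Q k‖ ≤ c) (hRn : ∀ j, ‖R j‖ ≤ c) (j k : ℤ) :
    ‖R j ∘L Q k‖ ≤ c ^ 2 * decaySum (ε / 3) * decay (ε / 3) j k := by
  rw [← adjoint.norm_map, adjoint_comp, decay_comm]
  refine norm_comp_le_of_decay hQ hε (fun m => hQQ k m) (fun m => ?_)
    ((adjoint.norm_map _).trans_le (hQn k)) ((adjoint.norm_map _).trans_le (hRn j))
  rw [← adjoint.norm_map, adjoint_comp, adjoint_adjoint, decay_comm]
  exact hRQ j m

theorem norm_partition_comp_le (hQ : ∀ x, HasSum (fun m => Q m x) x) (hε : 0 < ε)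
    (hQQ : ∀ j k, ‖Q j ∘L adjoint (Q k)‖ ≤ c * decay ε j k)
    (hRQ : ∀ j k, ‖adjoint (R j) ∘L Q k‖ ≤ c * decay ε j k)
    (hQn : ∀ k, ‖Q k‖ ≤ c) (hRn : ∀ j, ‖R j‖ ≤ c) (j k : ℤ) :
    ‖Q j ∘L R k‖ ≤ c ^ 2 * decaySum (ε / 3) * decay (ε / 3) j k := by
  rw [← adjoint.norm_map, adjoint_comp, decay_comm]
  exact norm_comp_le_of_decay hQ hε (fun m => hRQ k m) (fun m => hQQ m j)
    ((adjoint.norm_map _).trans_le (hRn k)) ((adjoint.norm_map _).trans_le (hQn j))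

theorem le_sq_mul_decaySum {δ : ℝ} (hc : 1 ≤ c) (hδ : 0 < δ) : c ≤ c ^ 2 * decaySum δ :=
  calc c ≤ c ^ 2 := by nlinarith
    _ ≤ c ^ 2 * decaySum δ := le_mul_of_one_le_right (sq_nonneg c) (one_le_decaySum hδ)

theorem mul_decay_le_of_one_le (hc : 1 ≤ c) (hε : 0 < ε) (j k : ℤ) :
    c * decay ε j k ≤ c ^ 2 * decaySum (ε / 3) * decay (ε / 3) j k :=
  mul_le_mul (le_sq_mul_decaySum hc (by positivity)) (decay_anti (by linarith) j k)
    (decay_pos ε j k).le (by linarith [le_sq_mul_decaySum (δ := ε / 3) hc (by positivity)])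

theorem norm_adjoint_comp_le (hQ : ∀ x, HasSum (fun m => Q m x) x) (hε : 0 < ε) (hc : 1 ≤ c)
    (hQQ : ∀ j k, ‖Q j ∘L adjoint (Q k)‖ ≤ c * decay ε j k)
    (hRQ : ∀ j k, ‖adjoint (R j) ∘L Q k‖ ≤ c * decay ε j k)
    (hQn : ∀ k, ‖Q k‖ ≤ c) (hRn : ∀ j, ‖R j‖ ≤ c) (j k : ℤ) :
    ‖adjoint (R j) ∘L R k‖ ≤
      (c ^ 2 * decaySum (ε / 3)) ^ 2 * decaySum (ε / 9) * decay (ε / 9) j k := by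
  have h := norm_comp_le_of_decay hQ (by positivity)
    (fun m => (hRQ j m).trans (mul_decay_le_of_one_le hc hε j m))
    (fun m => norm_partition_comp_le hQ hε hQQ hRQ hQn hRn m k)
    ((adjoint.norm_map _).trans_le ((hRn j).trans (le_sq_mul_decaySum hc (by positivity))))
    ((hRn k).trans (le_sq_mul_decaySum hc (by positivity)))
  rwa [div_div, show (3 : ℝ) * 3 = 9 by norm_num] at h

theorem norm_comp_adjoint_le (hQ : ∀ x, HasSum (fun m => Q m x) x) (hε : 0 < ε) (hc : 1 ≤ c)
    (hQQ : ∀ j k, ‖adjoint (Q j) ∘L Q k‖ ≤ c * decay ε j k)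
    (hRQ : ∀ j k, ‖R j ∘L adjoint (Q k)‖ ≤ c * decay ε j k)
    (hQn : ∀ k, ‖Q k‖ ≤ c) (hRn : ∀ j, ‖R j‖ ≤ c) (j k : ℤ) :
    ‖R j ∘L adjoint (R k)‖ ≤
      (c ^ 2 * decaySum (ε / 3)) ^ 2 * decaySum (ε / 9) * decay (ε / 9) j k := by
  have h := norm_comp_le_of_decay (k := k) hQ (by positivity)
    (fun m => norm_comp_partition_le hQ hε hQQ hRQ hQn hRn j m) (fun m => ?_)
    ((hRn j).trans (le_sq_mul_decaySum hc (by positivity)))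
    ((adjoint.norm_map _).trans_le ((hRn k).trans (le_sq_mul_decaySum hc (by positivity))))
  · rwa [div_div, show (3 : ℝ) * 3 = 9 by norm_num] at h
  · rw [← adjoint.norm_map, adjoint_comp, adjoint_adjoint, decay_comm]
    exact (hRQ k m).trans (mul_decay_le_of_one_le hc hε k m)

end Carbery

theorem carbery_cotlar_general (ε C : ℝ) (hε : 0 < ε) :
    ∃ C' : ℝ, ∀ (H : Type) (_ : NormedAddCommGroup H) (_ : InnerProductSpace ℝ H)
      (_ : CompleteSpace H) (Q R : ℤ → H →L[ℝ] H) (s : Finset ℤ),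
      (∀ k ∉ s, R k = 0) →
      (∀ x : H, HasSum (fun j => Q j x) x) →
      (∀ j k : ℤ,
        ‖(ContinuousLinearMap.adjoint (Q j)).comp (Q k)‖
          + ‖(Q j).comp (ContinuousLinearMap.adjoint (Q k))‖
            ≤ C * (2:ℝ) ^ (-(ε * |(j:ℝ) - (k:ℝ)|))) →
      (∀ j k : ℤ,
        ‖(R j).comp (ContinuousLinearMap.adjoint (Q k))‖
          + ‖(ContinuousLinearMap.adjoint (R j)).comp (Q k)‖
            ≤ C * (2:ℝ) ^ (-(ε * |(j:ℝ) - (k:ℝ)|))) →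
      (∀ j : ℤ, ‖R j‖ ≤ C) →
      ‖∑ k ∈ s, R k‖ ≤ C' := by
  set c := max C 1
  have hc : 1 ≤ c := le_max_right C 1
  refine ⟨√((c ^ 2 * decaySum (ε / 3)) ^ 2 * decaySum (ε / 9)) * decaySum (ε / 9 / 2),
    fun H _ _ _ Q R s _ hQ hQQ hRQ hRn => ?_⟩
  have split : ∀ {x y : ℝ} {j k : ℤ}, 0 ≤ x → 0 ≤ y → x + y ≤ C * decay ε j k →
      x ≤ c * decay ε j k ∧ y ≤ c * decay ε j k := fun hx hy h =>
    have h' := h.trans (mul_le_mul_of_nonneg_right (le_max_left C 1) (decay_pos ε _ _).le)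
    ⟨by linarith, by linarith⟩
  have hQQ₁ := fun j k => (split (norm_nonneg _) (norm_nonneg _) (hQQ j k)).1
  have hQQ₂ := fun j k => (split (norm_nonneg _) (norm_nonneg _) (hQQ j k)).2
  have hRQ₁ := fun j k => (split (norm_nonneg _) (norm_nonneg _) (hRQ j k)).1
  have hRQ₂ := fun j k => (split (norm_nonneg _) (norm_nonneg _) (hRQ j k)).2
  have hRn' : ∀ j, ‖R j‖ ≤ c := fun j => (hRn j).trans (le_max_left C 1)
  have hQn : ∀ k, ‖Q k‖ ≤ c := fun k => by
    have h := hQQ₁ k k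
    rw [ContinuousLinearMap.norm_adjoint_comp_self, decay_self, mul_one] at h
    nlinarith [norm_nonneg (Q k)]
  refine norm_sum_le_of_decay R s (by positivity) (fun j k => ?_) (fun j k => ?_)
  · exact norm_adjoint_comp_le hQ hε hc hQQ₂ hRQ₂ hQn hRn' j k
  · exact norm_comp_adjoint_le hQ hε hc hQQ₁ hRQ₁ hQn hRn' j k

/-- **Carbery's variant of Cotlar's Lemma.** Given `ε > 0` and `C > 0`, there is a
constant `C'` (depending only on `ε` and `C`) such that for all Hilbert spaces `H` and
families `(Q k)`, `(R k)` of bounded operators on `H` with only finitely many `R k`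
nonzero, satisfying (i) `∑ Q j = I` strongly, (ii) almost-orthogonality of the `Q`'s,
(iii) almost-orthogonality of the `R`'s against the `Q`'s, and (iv) `‖R j‖ ≤ C`,
one has `‖∑ R j‖ ≤ C'`. -/
theorem carbery_cotlar (ε C : ℝ) (hε : 0 < ε) (hC : 0 < C) :
    ∃ C' : ℝ, ∀ (H : Type) (_ : NormedAddCommGroup H) (_ : InnerProductSpace ℝ H)
      (_ : CompleteSpace H) (Q R : ℤ → H →L[ℝ] H) (s : Finset ℤ),
      (∀ k ∉ s, R k = 0) →
      (∀ x : H, HasSum (fun j => Q j x) x) →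
      (∀ j k : ℤ,
        ‖(ContinuousLinearMap.adjoint (Q j)).comp (Q k)‖
          + ‖(Q j).comp (ContinuousLinearMap.adjoint (Q k))‖
            ≤ C * (2:ℝ) ^ (-(ε * |(j:ℝ) - (k:ℝ)|))) →
      (∀ j k : ℤ,
        ‖(R j).comp (ContinuousLinearMap.adjoint (Q k))‖
          + ‖(ContinuousLinearMap.adjoint (R j)).comp (Q k)‖
            ≤ C * (2:ℝ) ^ (-(ε * |(j:ℝ) - (k:ℝ)|))) →
      (∀ j : ℤ, ‖R j‖ ≤ C) →
      ‖∑ k ∈ s, R k‖ ≤ C' :=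
  carbery_cotlar_general ε C hε
end
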